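/- Let A be a finite subdirectly irreducible commutative BCK-algebra (equivalently here: finite, single atom, every interval [0,a] a chain) that is not a chain. Then the set m(A) of maximal elements generates A if and only if there is no proper subalgebra of A of the form A_k ∪ m(A) containing both b(A) and m(A) (i.e., S_δ(A) = ∅). -/

import Mathlib

structure CBCK (α : Type*) where
  sub : α → α → α
  zero : α
  sub_zero : ∀ x, sub x zero = x
  zero_sub : ∀ x, sub zero x = zero
  comm : ∀ x y, sub x (sub x y) = sub y (sub y x)
  exch : ∀ x y z, sub (sub x y) z = sub (sub x z) y

namespace CBCK

variable {α : Type*}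

/-- The induced order: `x ≤ y` iff `x ⊖ y = 0`. -/
def le (A : CBCK α) (x y : α) : Prop := A.sub x y = A.zero

def lt (A : CBCK α) (x y : α) : Prop := A.le x y ∧ x ≠ y

/-- The meet `x ∧ y = x ⊖ (x ⊖ y)`. -/
def meet (A : CBCK α) (x y : α) : α := A.sub x (A.sub x y)

/-- An atom: a minimal nonzero element. -/
def atom (A : CBCK α) (e : α) : Prop := e ≠ A.zero ∧ ∀ x, A.lt x e → x = A.zero

/-- A maximal element. -/
def maximal (A : CBCK α) (m : α) : Prop := ∀ x, A.le m x → x = m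

/-- A branching element: `b` with `c, d > b` and `c ∧ d = b`. -/
def branching (A : CBCK α) (b : α) : Prop :=
  ∃ c d, A.lt b c ∧ A.lt b d ∧ A.meet c d = b

/-- The rooted-tree condition: every interval `[0, a]` is a chain. -/
def chainIntervals (A : CBCK α) : Prop :=
  ∀ a x y, A.le x a → A.le y a → A.le x y ∨ A.le y x

/-- The height of an element: `h(a) = |[0,a]| - 1`. -/
noncomputable def height (A : CBCK α) (a : α) : ℕ :=
  ({x | A.le x a} : Set α).ncard - 1

/-- Iterated subtraction: `x ⊖ 0·y = x`, `x ⊖ (k+1)·y = (x ⊖ k·y) ⊖ y`. -/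
def isub (A : CBCK α) (x : α) : ℕ → α → α
  | 0, _ => x
  | k + 1, y => A.sub (A.isub x k y) y

/-- A subalgebra universe: contains `0` and is closed under `⊖`. -/
def IsSub (A : CBCK α) (B : Set α) : Prop :=
  A.zero ∈ B ∧ ∀ x ∈ B, ∀ y ∈ B, A.sub x y ∈ B

/-- The subalgebra generated by `S`: the least `⊖`-closed subset containing `S ∪ {0}`. -/
def gen (A : CBCK α) (S : Set α) : Set α :=
  ⋂₀ {B : Set α | A.IsSub B ∧ S ⊆ B}

end CBCK

namespace CBCK

variable {α : Type*} (A : CBCK α)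

set_option linter.unusedSectionVars false

theorem sub_self (x : α) : A.sub x x = A.zero := by
  have h := A.comm x A.zero
  rw [A.sub_zero, A.zero_sub] at h
  exact h

theorem le_refl (x : α) : A.le x x := A.sub_self x

theorem zero_le (x : α) : A.le A.zero x := A.zero_sub x

theorem le_zero {x : α} (h : A.le x A.zero) : x = A.zero := by
  rw [le, A.sub_zero] at h; exact h

theorem eq_sub_of_le {x y : α} (h : A.le x y) : A.sub y (A.sub y x) = x := by
  have := A.comm y x
  rw [this, h, A.sub_zero]

theorem le_antisymm {x y : α} (h1 : A.le x y) (h2 : A.le y x) : x = y := by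
  have := A.eq_sub_of_le h1
  rw [h2, A.sub_zero] at this; exact this.symm

theorem le_trans {x y z : α} (h1 : A.le x y) (h2 : A.le y z) : A.le x z := by
  have hx := A.eq_sub_of_le h1
  rw [le, ← hx, A.exch, h2, A.zero_sub]

theorem sub_le (x y : α) : A.le (A.sub x y) x := by
  rw [le, A.exch, A.sub_self, A.zero_sub]

theorem sub_sub_cancel {x z : α} (h : A.le z x) : A.sub x (A.sub x z) = z :=
  A.eq_sub_of_le h

theorem sub_antitone {a b x : α} (h : A.le a b) : A.le (A.sub x b) (A.sub x a) := by
  rw [le, A.exch, A.comm x a, ← A.exch, h, A.zero_sub]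

theorem meet_le_left (x y : α) : A.le (A.meet x y) x := A.sub_le x _

theorem meet_comm (x y : α) : A.meet x y = A.meet y x := A.comm x y

theorem meet_le_right (x y : α) : A.le (A.meet x y) y := by
  rw [A.meet_comm]; exact A.sub_le y _

theorem le_meet {x y z : α} (h1 : A.le z x) (h2 : A.le z y) : A.le z (A.meet x y) := by
  have h3 : A.le (A.sub x y) (A.sub x z) := A.sub_antitone h2
  have h4 : A.le (A.sub x (A.sub x z)) (A.meet x y) := A.sub_antitone h3
  rw [A.eq_sub_of_le h1] at h4
  exact h4

theorem meet_eq_right {x y : α} (h : A.le y x) : A.meet x y = y := by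
  rw [meet, A.comm, h, A.sub_zero]

theorem meet_eq_left {x y : α} (h : A.le x y) : A.meet x y = x := by
  rw [meet, h, A.sub_zero]

theorem sub_meet (x y : α) : A.sub x (A.meet x y) = A.sub x y := by
  rw [meet, A.sub_sub_cancel (A.sub_le x y)]



section Height
variable [Fintype α]

theorem ncard_le_set (a : α) : ({x | A.le x a} : Set α).ncard = A.height a + 1 := by
  have hne : a ∈ {x | A.le x a} := A.le_refl a
  have h1 : 1 ≤ ({x | A.le x a} : Set α).ncard := by
    exact (Set.ncard_pos (Set.toFinite _)).mpr ⟨a, hne⟩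
  rw [height]; omega

theorem height_mono {x y : α} (h : A.le x y) : A.height x ≤ A.height y := by
  have : ({z | A.le z x} : Set α) ⊆ {z | A.le z y} := fun z hz => A.le_trans hz h
  have := Set.ncard_le_ncard this (Set.toFinite _)
  rw [ncard_le_set, ncard_le_set] at this; omega

theorem height_strict_mono {x y : α} (h : A.le x y) (hne : x ≠ y) :
    A.height x < A.height y := by
  have hss : ({z | A.le z x} : Set α) ⊂ {z | A.le z y} := by
    constructor
    · exact fun z hz => A.le_trans hz h
    · intro hsub
      exact hne (A.le_antisymm h (hsub (A.le_refl y)))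
  have := Set.ncard_lt_ncard hss (Set.toFinite _)
  rw [ncard_le_set, ncard_le_set] at this; omega

theorem height_zero : A.height A.zero = 0 := by
  have : ({x | A.le x A.zero} : Set α) = {A.zero} := by
    ext z; simp only [Set.mem_setOf_eq, Set.mem_singleton_iff]
    exact ⟨fun h => A.le_zero h, fun h => h ▸ A.le_refl _⟩
  rw [height, this, Set.ncard_singleton]

theorem height_pos {x : α} (h : x ≠ A.zero) : 1 ≤ A.height x := by
  have := A.height_strict_mono (A.zero_le x) (Ne.symm h)
  rw [A.height_zero] at this; omega

theorem eq_zero_of_height_eq_zero {x : α} (h : A.height x = 0) : x = A.zero := by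
  by_contra hx
  have := A.height_pos hx; omega

theorem height_inj (hchain : A.chainIntervals) {a x y : α} (hx : A.le x a) (hy : A.le y a)
    (h : A.height x = A.height y) : x = y := by
  rcases hchain a x y hx hy with h1 | h1
  · by_contra hne; have := A.height_strict_mono h1 hne; omega
  · by_contra hne; have := A.height_strict_mono h1 (Ne.symm hne); omega

theorem le_of_height_le (hchain : A.chainIntervals) {a x y : α} (hx : A.le x a) (hy : A.le y a)
    (h : A.height x ≤ A.height y) : A.le x y := by
  rcases hchain a x y hx hy with h1 | h1
  · exact h1
  · rcases eq_or_ne x y with h2 | hne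
    · rw [h2]; exact A.le_refl y
    · have := A.height_strict_mono h1 (Ne.symm hne); omega

/-- Key: height of a difference. -/
theorem height_sub (hchain : A.chainIntervals) {x w : α} (hw : A.le w x) :
    A.height (A.sub x w) = A.height x - A.height w := by
  classical
  set T1 : Set α := {z | A.le w z ∧ A.le z x} with hT1
  set T2 : Set α := {u | A.le u (A.sub x w)} with hT2
  have hmap1 : ∀ z ∈ T1, A.sub x z ∈ T2 := by
    intro z hz; exact A.sub_antitone hz.1
  have hmap2 : ∀ u ∈ T2, A.sub x u ∈ T1 := by
    intro u hu
    have hux : A.le u x := A.le_trans hu (A.sub_le x w)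
    constructor
    · have := A.sub_antitone (x := x) hu
      rwa [A.sub_sub_cancel hw] at this
    · exact A.sub_le x u
  have hinv : ∀ z ∈ T1, A.sub x (A.sub x z) = z := fun z hz => A.sub_sub_cancel hz.2
  have himg : (fun z => A.sub x z) '' T1 = T2 := by
    apply Set.Subset.antisymm
    · rintro _ ⟨z, hz, rfl⟩; exact hmap1 z hz
    · intro u hu
      refine ⟨A.sub x u, hmap2 u hu, ?_⟩
      exact A.sub_sub_cancel (A.le_trans hu (A.sub_le x w))
  have hinj : Set.InjOn (fun z => A.sub x z) T1 := by
    intro z1 h1 z2 h2 heq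
    have heq' : A.sub x z1 = A.sub x z2 := heq
    have h1' := hinv z1 h1
    rw [heq', hinv z2 h2] at h1'
    exact h1'.symm
  have hcard : T2.ncard = T1.ncard := by rw [← himg, Set.ncard_image_of_injOn hinj]
  -- T1 = [0,x] \ ([0,w] \ {w})
  have hsplit : T1 = {z | A.le z x} \ ({z | A.le z w} \ {w}) := by
    ext z
    simp only [hT1, Set.mem_setOf_eq, Set.mem_diff, Set.mem_singleton_iff]
    constructor
    · rintro ⟨h1, h2⟩
      refine ⟨h2, fun hc => hc.2 (A.le_antisymm hc.1 h1)⟩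
    · rintro ⟨h1, h2⟩
      refine ⟨?_, h1⟩
      rcases hchain x z w h1 hw with h3 | h3
      · rcases eq_or_ne z w with rfl | hne
        · exact A.le_refl z
        · exact absurd ⟨h3, hne⟩ h2
      · exact h3
  have hsub' : ({z | A.le z w} \ {w} : Set α) ⊆ {z | A.le z x} := by
    rintro z ⟨hz, _⟩; exact A.le_trans hz hw
  have hc1 : T1.ncard = ({z | A.le z x} : Set α).ncard - (({z | A.le z w} \ {w}) : Set α).ncard := by
    rw [hsplit, Set.ncard_diff hsub' (Set.toFinite _)]
  have hc2 : (({z | A.le z w} \ {w}) : Set α).ncard = A.height w := by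
    have hwmem : w ∈ {z | A.le z w} := A.le_refl w
    rw [Set.ncard_diff_singleton_of_mem hwmem, ncard_le_set]
    omega
  have hc3 := A.ncard_le_set x
  have hc4 := A.ncard_le_set (A.sub x w)
  have hmono := A.height_mono hw
  rw [hT2] at hcard
  rw [hc4] at hcard
  rw [hc1, hc2, hc3] at hcard
  omega

theorem height_sub_meet (hchain : A.chainIntervals) (x y : α) :
    A.height (A.sub x y) = A.height x - A.height (A.meet x y) := by
  rw [← A.sub_meet x y]
  exact A.height_sub hchain (A.meet_le_left x y)

/-- Existence of elements of each height below `a`. -/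
theorem exists_height (hchain : A.chainIntervals) {a : α} {j : ℕ} (hj : j ≤ A.height a) :
    ∃ x, A.le x a ∧ A.height x = j := by
  classical
  set S : Set α := {x | A.le x a}
  have himg : A.height '' S ⊆ Set.Iic (A.height a) := by
    rintro _ ⟨x, hx, rfl⟩; exact A.height_mono hx
  have hinj : Set.InjOn A.height S := fun x hx y hy h => A.height_inj hchain hx hy h
  have hcard1 : (A.height '' S).ncard = A.height a + 1 := by
    rw [Set.ncard_image_of_injOn hinj]; exact A.ncard_le_set a
  have hcard2 : (Set.Iic (A.height a)).ncard = A.height a + 1 := by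
    rw [← Finset.coe_Iic, Set.ncard_coe_finset, Nat.card_Iic]
  have heq : A.height '' S = Set.Iic (A.height a) := by
    exact Set.eq_of_subset_of_ncard_le himg (by omega) (Set.finite_Iic _)
  have : j ∈ A.height '' S := heq ▸ (Set.mem_Iic.mpr hj)
  obtain ⟨x, hx, hxj⟩ := this
  exact ⟨x, hx, hxj⟩

end Height


section More
variable [Fintype α]

/-- Every element lies below a maximal element. -/
theorem exists_maximal_above (x : α) : ∃ m, A.le x m ∧ A.maximal m := by
  classical
  obtain ⟨n, hub⟩ : ∃ n, ∀ a : α, A.height a ≤ n :=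
    ⟨Fintype.card α, fun a => by
      have := Set.ncard_le_ncard (Set.subset_univ {z | A.le z a}) (Set.toFinite _)
      rw [A.ncard_le_set, Set.ncard_univ, Nat.card_eq_fintype_card] at this
      omega⟩
  have key : ∀ j (x : α), n - A.height x ≤ j → ∃ m, A.le x m ∧ A.maximal m := by
    intro j
    induction j with
    | zero =>
      intro x hx
      refine ⟨x, A.le_refl x, fun y hy => ?_⟩
      by_contra hne
      have := A.height_strict_mono hy (Ne.symm hne)
      have := hub y
      omega
    | succ j ih =>
      intro x hx
      by_cases hmax : A.maximal x
      · exact ⟨x, A.le_refl x, hmax⟩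
      · simp only [maximal, not_forall] at hmax
        obtain ⟨y, hy, hne⟩ := hmax
        have hlt := A.height_strict_mono hy (Ne.symm (by exact fun h => hne h))
        obtain ⟨m, hm1, hm2⟩ := ih y (by omega)
        exact ⟨m, A.le_trans hy hm1, hm2⟩
  exact key n x (by omega)

/-- The unique atom lies below every nonzero element. -/
theorem atom_le (hchain : A.chainIntervals) {e : α} (huniq : ∀ x, A.atom x → x = e)
    {x : α} (hx : x ≠ A.zero) : A.le e x := by
  obtain ⟨z, hz1, hz2⟩ := A.exists_height hchain (A.height_pos hx)
  have hz0 : z ≠ A.zero := fun h => by rw [h, A.height_zero] at hz2; omega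
  have hatom : A.atom z := by
    refine ⟨hz0, fun w hw => ?_⟩
    have := A.height_strict_mono hw.1 hw.2
    exact A.eq_zero_of_height_eq_zero (by omega)
  rw [← huniq z hatom]; exact hz1

theorem gen_isSub (S : Set α) : A.IsSub (A.gen S) := by
  constructor
  · intro B hB; exact hB.1.1
  · intro x hx y hy B hB
    exact hB.1.2 x (hx B hB) y (hy B hB)

theorem subset_gen (S : Set α) : S ⊆ A.gen S := fun x hx B hB => hB.2 hx

theorem gen_subset {S B : Set α} (h1 : A.IsSub B) (h2 : S ⊆ B) : A.gen S ⊆ B :=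
  Set.sInter_subset_of_mem ⟨h1, h2⟩

end More
end CBCK

/-- Number theory: a set of naturals bounded by `N ∈ S`, closed under truncated
subtraction, is the set of multiples of its least positive element, up to `N`. -/
theorem nat_gcd_struct (S : Set ℕ) (N : ℕ) (hN : N ∈ S) (hN1 : 1 ≤ N)
    (hb : ∀ s ∈ S, s ≤ N) (hc : ∀ a ∈ S, ∀ b ∈ S, a - b ∈ S) :
    ∃ g, 1 ≤ g ∧ (∀ s ∈ S, g ∣ s) ∧ (∀ j, j ≤ N → g ∣ j → j ∈ S) := by
  classical
  set P : Set ℕ := {s | s ∈ S ∧ 0 < s} with hP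
  have hPne : P.Nonempty := ⟨N, hN, hN1⟩
  set g := sInf P with hg
  have hgP : g ∈ P := Nat.sInf_mem hPne
  have hg1 : 1 ≤ g := hgP.2
  have hgS : g ∈ S := hgP.1
  have hdvd : ∀ s ∈ S, g ∣ s := by
    intro s
    induction s using Nat.strong_induction_on with
    | _ s ih =>
      intro hs
      rcases Nat.lt_or_ge s g with h | h
      · have : s = 0 := by
          by_contra h0
          have : s ∈ P := ⟨hs, Nat.pos_of_ne_zero h0⟩
          have := Nat.sInf_le this
          omega
        simp [this]
      · have h1 : s - g ∈ S := hc s hs g hgS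
        have h2 : g ∣ s - g := ih (s - g) (by omega) h1
        obtain ⟨c, hcc⟩ := h2
        exact ⟨c + 1, by rw [Nat.mul_succ]; omega⟩
  refine ⟨g, hg1, hdvd, ?_⟩
  have hstep : ∀ i : ℕ, g * i ≤ N → N - g * i ∈ S := by
    intro i
    induction i with
    | zero => simpa using hN
    | succ i ih =>
      intro hi
      have hmul : g * i ≤ g * (i + 1) := Nat.mul_le_mul_left g (by omega)
      have h1 : N - g * i ∈ S := ih (by omega)
      have h2 : N - g * i - g ∈ S := hc _ h1 g hgS
      have : N - g * (i + 1) = N - g * i - g := by rw [Nat.mul_succ]; omega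
      rwa [this]
  intro j hj hdj
  have hdN : g ∣ N := hdvd N hN
  have hdNj : g ∣ N - j := Nat.dvd_sub hdN hdj
  obtain ⟨i, hi⟩ := hdNj
  have : N - g * i = j := by omega
  rw [← this]
  exact hstep i (by omega)

/-- Per-branch gcd structure of a subalgebra `B` below an element `m ∈ B`. -/
theorem CBCK.branch_gcd {α : Type*} [Fintype α] (A : CBCK α) (hchain : A.chainIntervals)
    {B : Set α} (hB : A.IsSub B) {m : α} (hm : m ∈ B) (hm0 : m ≠ A.zero) :
    ∃ g, 1 ≤ g ∧ (∀ x ∈ B, A.le x m → g ∣ A.height x) ∧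
      (∀ x, A.le x m → g ∣ A.height x → x ∈ B) := by
  classical
  set S : Set ℕ := A.height '' {x | x ∈ B ∧ A.le x m} with hS
  have hNS : A.height m ∈ S := ⟨m, ⟨hm, A.le_refl m⟩, rfl⟩
  have hN1 : 1 ≤ A.height m := A.height_pos hm0
  have hb : ∀ s ∈ S, s ≤ A.height m := by
    rintro _ ⟨x, hx, rfl⟩; exact A.height_mono hx.2
  have hc : ∀ a ∈ S, ∀ b ∈ S, a - b ∈ S := by
    rintro _ ⟨x, hx, rfl⟩ _ ⟨y, hy, rfl⟩
    have hsubB : A.sub x y ∈ B := hB.2 x hx.1 y hy.1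
    have hsubm : A.le (A.sub x y) m := A.le_trans (A.sub_le x y) hx.2
    refine ⟨A.sub x y, ⟨hsubB, hsubm⟩, ?_⟩
    rcases hchain m x y hx.2 hy.2 with h1 | h1
    · have hle := A.height_mono h1
      have h0 : A.sub x y = A.zero := h1
      rw [h0, A.height_zero]; omega
    · rw [A.height_sub_meet hchain, A.meet_eq_right h1]
  obtain ⟨g, hg1, hg2, hg3⟩ := nat_gcd_struct S (A.height m) hNS hN1 hb hc
  refine ⟨g, hg1, ?_, ?_⟩
  · intro x hx hxm; exact hg2 _ ⟨x, ⟨hx, hxm⟩, rfl⟩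
  · intro x hxm hdvd
    have hj : A.height x ∈ S := hg3 _ (A.height_mono hxm) hdvd
    obtain ⟨y, hy, hyx⟩ := hj
    have heq := A.height_inj hchain hy.2 hxm hyx
    exact heq ▸ hy.1

/-- For a finite single-atom rooted-tree cBCK-algebra of height `n` that is not
a chain, `m(A)` generates `A` iff there is no proper subalgebra of the form
`A_k ∪ m(A)` containing both `b(A)` and `m(A)` (i.e. `S_δ(A) = ∅`). -/
theorem stmt13 {α : Type*} [Fintype α] (A : CBCK α)
    (hchain : A.chainIntervals)
    (e : α) (he : A.atom e) (huniq : ∀ x, A.atom x → x = e)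
    (hnotchain : ∃ x y : α, ¬ A.le x y ∧ ¬ A.le y x)
    (n : ℕ) (hub : ∀ a, A.height a ≤ n) (hex : ∃ a, A.height a = n) :
    A.gen {m | A.maximal m} = Set.univ ↔
      ¬ ∃ k : ℕ, k ∣ n ∧ 1 < k ∧ k < n ∧
        A.IsSub ({a | k ∣ A.height a} ∪ {m | A.maximal m}) ∧
        ({a | k ∣ A.height a} ∪ {m | A.maximal m}) ≠ Set.univ ∧
        {b | A.branching b} ⊆ {a | k ∣ A.height a} ∧
        {m | A.maximal m} ⊆ {a | k ∣ A.height a} := by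
  classical
  constructor
  · rintro hgen ⟨k, _, _, _, hsub, hne, _, _⟩
    have h1 : A.gen {m | A.maximal m} ⊆ {a | k ∣ A.height a} ∪ {m | A.maximal m} :=
      A.gen_subset hsub (fun m hm => Or.inr hm)
    rw [hgen] at h1
    exact hne (Set.eq_univ_of_univ_subset h1)
  · intro hno
    by_contra hBne
    apply hno
    set B := A.gen {m | A.maximal m} with hBdef
    have hBsub : A.IsSub B := A.gen_isSub _
    have mB : ∀ m, A.maximal m → m ∈ B := fun m hm => A.subset_gen _ hm
    -- two distinct maximal elements
    obtain ⟨x0, y0, hxy1, hxy2⟩ := hnotchain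
    obtain ⟨m1, hm1x, hm1⟩ := A.exists_maximal_above x0
    obtain ⟨m2, hm2y, hm2⟩ := A.exists_maximal_above y0
    have hm1m2 : m1 ≠ m2 := by
      rintro rfl
      rcases hchain m1 x0 y0 hm1x hm2y with h | h
      · exact hxy1 h
      · exact hxy2 h
    -- maximal elements are nonzero
    have hmaxne : ∀ m, A.maximal m → m ≠ A.zero := by
      rintro m hm rfl
      have h1 : x0 = A.zero := hm x0 (A.zero_le x0)
      have h2 : y0 = A.zero := hm y0 (A.zero_le y0)
      rw [h1, h2] at hxy1
      exact hxy1 (A.le_refl _)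
    have he1 : 1 ≤ A.height e := A.height_pos he.1
    -- per-branch gcds
    have gdef : ∀ m, A.maximal m → ∃ g, 1 ≤ g ∧
        (∀ x ∈ B, A.le x m → g ∣ A.height x) ∧
        (∀ x, A.le x m → g ∣ A.height x → x ∈ B) :=
      fun m hm => A.branch_gcd hchain hBsub (mB m hm) (hmaxne m hm)
    choose gf hg1 hg2 hg3 using gdef
    set k := gf m1 hm1 with hkdef
    -- meets of elements of B are in B
    have hmeetB : ∀ x ∈ B, ∀ y ∈ B, A.meet x y ∈ B := fun x hx y hy =>
      hBsub.2 x hx _ (hBsub.2 x hx y hy)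
    -- meets of maximal elements have positive height
    have hmeetpos : ∀ ma mb, A.maximal ma → A.maximal mb → 1 ≤ A.height (A.meet ma mb) := by
      intro ma mb hma hmb
      have hea : A.le e ma := A.atom_le hchain huniq (hmaxne ma hma)
      have heb : A.le e mb := A.atom_le hchain huniq (hmaxne mb hmb)
      have := A.height_mono (A.le_meet hea heb)
      omega
    -- uniformity of the gcds
    have huni : ∀ m (hm : A.maximal m), gf m hm = k := by
      intro m hm
      by_cases hmm : m = m1
      · subst hmm; rfl
      · have hmB : A.meet m1 m ∈ B := hmeetB m1 (mB m1 hm1) m (mB m hm)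
        have ht1 : 1 ≤ A.height (A.meet m1 m) := hmeetpos m1 m hm1 hm
        have hgt : gf m hm ∣ A.height (A.meet m1 m) :=
          hg2 m hm _ hmB (A.meet_le_right m1 m)
        have hkt : k ∣ A.height (A.meet m1 m) :=
          hg2 m1 hm1 _ hmB (A.meet_le_left m1 m)
        have hdvd1 : k ∣ gf m hm := by
          -- element of height gf m hm below m
          have hgm : gf m hm ∣ A.height m := hg2 m hm m (mB m hm) (A.le_refl m)
          have hm1' : 1 ≤ A.height m := A.height_pos (hmaxne m hm)
          have hgle : gf m hm ≤ A.height m := Nat.le_of_dvd (by omega) hgm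
          obtain ⟨y, hym, hyh⟩ := A.exists_height hchain hgle
          have hyB : y ∈ B := hg3 m hm y hym (by rw [hyh])
          have hymeet : A.le y (A.meet m1 m) := by
            refine A.le_of_height_le hchain hym (A.meet_le_right m1 m) ?_
            rw [hyh]
            exact Nat.le_of_dvd (by omega) hgt
          have hym1 : A.le y m1 := A.le_trans hymeet (A.meet_le_left m1 m)
          have := hg2 m1 hm1 y hyB hym1
          rwa [hyh] at this
        have hdvd2 : gf m hm ∣ k := by
          have hkm : k ∣ A.height m1 := hg2 m1 hm1 m1 (mB m1 hm1) (A.le_refl m1)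
          have hm1' : 1 ≤ A.height m1 := A.height_pos (hmaxne m1 hm1)
          have hkle : k ≤ A.height m1 := Nat.le_of_dvd (by omega) hkm
          obtain ⟨z, hzm, hzh⟩ := A.exists_height hchain hkle
          have hzB : z ∈ B := hg3 m1 hm1 z hzm (by rw [hzh])
          have hzmeet : A.le z (A.meet m1 m) := by
            refine A.le_of_height_le hchain hzm (A.meet_le_left m1 m) ?_
            rw [hzh]
            exact Nat.le_of_dvd (by omega) hkt
          have hzm' : A.le z m := A.le_trans hzmeet (A.meet_le_right m1 m)
          have := hg2 m hm z hzB hzm'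
          rwa [hzh] at this
        exact Nat.dvd_antisymm hdvd2 hdvd1
    -- B is exactly the set of elements with height divisible by k
    have hBeq : B = {a | k ∣ A.height a} := by
      ext x
      constructor
      · intro hx
        obtain ⟨m, hxm, hm⟩ := A.exists_maximal_above x
        have := hg2 m hm x hx hxm
        rwa [huni m hm] at this
      · intro hx
        obtain ⟨m, hxm, hm⟩ := A.exists_maximal_above x
        exact hg3 m hm x hxm (by rw [huni m hm]; exact hx)
    have hmax_k : {m | A.maximal m} ⊆ {a | k ∣ A.height a} := by
      intro m hm
      rw [← hBeq]
      exact mB m hm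
    have hun : {a | k ∣ A.height a} ∪ {m | A.maximal m} = B := by
      rw [hBeq]
      exact Set.union_eq_self_of_subset_right hmax_k
    -- k divides n
    obtain ⟨a0, ha0⟩ := hex
    have ha0max : A.maximal a0 := by
      intro y hy
      by_contra hne
      have := A.height_strict_mono hy (Ne.symm hne)
      have := hub y
      omega
    have hkn : k ∣ n := by
      have h := hmax_k ha0max
      simp only [Set.mem_setOf_eq] at h
      rwa [ha0] at h
    -- 1 < k
    have hk1 : 1 ≤ k := hg1 m1 hm1
    have hklt : 1 < k := by
      rcases Nat.lt_or_ge 1 k with h | h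
      · exact h
      · exfalso
        have hkone : k = 1 := by omega
        apply hBne
        rw [hBdef] at hBeq ⊢
        rw [hBeq, hkone]
        simp
    -- k < n
    have hkn' : k < n := by
      have hmB : A.meet m1 m2 ∈ B := hmeetB m1 (mB m1 hm1) m2 (mB m2 hm2)
      have hkt : k ∣ A.height (A.meet m1 m2) := by
        have := hmB
        rw [hBeq] at this
        exact this
      have ht1 : 1 ≤ A.height (A.meet m1 m2) := hmeetpos m1 m2 hm1 hm2
      have hmne : A.meet m1 m2 ≠ m1 := by
        intro h
        have : A.le m1 m2 := by rw [← h]; exact A.meet_le_right m1 m2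
        exact hm1m2 (hm1 m2 this).symm
      have hlt := A.height_strict_mono (A.meet_le_left m1 m2) hmne
      have := hub m1
      have := Nat.le_of_dvd (by omega) hkt
      omega
    -- branching elements
    have hbr : {b | A.branching b} ⊆ {a | k ∣ A.height a} := by
      rintro b ⟨c, d, hc, hd, hmeet⟩
      rw [← hBeq]
      obtain ⟨ma, hcma, hma⟩ := A.exists_maximal_above c
      obtain ⟨mb, hdmb, hmb⟩ := A.exists_maximal_above d
      have hbma : A.le b ma := A.le_trans hc.1 hcma
      have hbmb : A.le b mb := A.le_trans hd.1 hdmb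
      have hbmeet : A.le b (A.meet ma mb) := A.le_meet hbma hbmb
      have hcontra : ∀ m', c ∈ {x | A.le x m'} → d ∈ {x | A.le x m'} → False := by
        intro m' hcm hdm
        rcases hchain m' c d hcm hdm with h | h
        · exact hc.2 (by rw [← hmeet, A.meet_eq_left h])
        · exact hd.2 (by rw [← hmeet, A.meet_eq_right h])
      rcases hchain ma (A.meet ma mb) c (A.meet_le_left ma mb) hcma with h1 | h1
      · rcases hchain mb (A.meet ma mb) d (A.meet_le_right ma mb) hdmb with h2 | h2
        · have hle : A.le (A.meet ma mb) b := by
            rw [← hmeet]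
            exact A.le_meet h1 h2
          have : A.meet ma mb = b := A.le_antisymm hle hbmeet
          rw [← this]
          exact hmeetB ma (mB ma hma) mb (mB mb hmb)
        · exact (hcontra ma hcma (A.le_trans h2 (A.meet_le_left ma mb))).elim
      · exact (hcontra mb (A.le_trans h1 (A.meet_le_right ma mb)) hdmb).elim
    refine ⟨k, hkn, hklt, hkn', ?_, ?_, hbr, hmax_k⟩
    · rw [hun]; exact hBsub
    · rw [hun]; exact hBne
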